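/- arXiv:1312.6027 — 8 statements merged into one kernel-verified Lean document; each statement's English description precedes it below -/
import Mathlib

section
/- If H₁ ⊆ H₂ are subgroups of a group G, then H₁ ≈ H₂ (as subsets of G) if and only if the index of H₁ in H₂ is finite. -/
/-!
Since `H₁ ⊆ H₂`, only `H₂ ∝ H₁` is at stake. A set is `∝ H` exactly when it meets finitely many
left cosets of `H`, and `H₂` meets exactly `[H₂ : H₁]` left cosets of `H₁`: by orbit–stabilizer
for `H₂` acting on `G ⧸ H₁`, the orbit of the trivial coset is the image of `H₂` and its stabilizer
is `H₁ ∩ H₂`.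
-/

open scoped Pointwise

def Bdd {G : Type*} [Group G] (A B : Set G) : Prop :=
  ∃ F : Finset G, A ⊆ (F : Set G) * B

def EquivBdd {G : Type*} [Group G] (A B : Set G) : Prop :=
  Bdd A B ∧ Bdd B A

section

variable {G : Type*} [Group G]

theorem bdd_of_subset {A B : Set G} (h : A ⊆ B) : Bdd A B :=
  ⟨{1}, by simpa using h⟩

theorem bdd_subgroup_iff_finite_image_mk (A : Set G) (H : Subgroup G) :
    Bdd A H ↔ (QuotientGroup.mk '' A : Set (G ⧸ H)).Finite := by
  constructor
  · rintro ⟨F, hF⟩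
    refine (F.finite_toSet.image QuotientGroup.mk).subset ?_
    rintro _ ⟨a, ha, rfl⟩
    obtain ⟨f, hf, b, hb, rfl⟩ := hF ha
    exact ⟨f, hf, (QuotientGroup.mk_mul_of_mem f hb).symm⟩
  · intro hA
    refine ⟨(hA.image Quotient.out).toFinset, fun a ha => ?_⟩
    obtain ⟨b, hb⟩ := QuotientGroup.mk_out_eq_mul H a
    refine ⟨_, by simpa using ⟨a, ha, rfl⟩, (b : G)⁻¹, H.inv_mem b.2, ?_⟩
    simp [hb]

theorem Subgroup.relIndex_eq_ncard_image_mk (H K : Subgroup G) :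
    H.relIndex K = (QuotientGroup.mk '' (K : Set G) : Set (G ⧸ H)).ncard := by
  have hsmul (k : K) : k • ((1 : G) : G ⧸ H) = ((k : G) : G ⧸ H) := by
    change (k : G) • ((1 : G) : G ⧸ H) = _
    simp
  have hstab : H.subgroupOf K = MulAction.stabilizer K ((1 : G) : G ⧸ H) := by
    ext k
    simp [Subgroup.mem_subgroupOf, hsmul, QuotientGroup.eq]
  have horbit : MulAction.orbit K ((1 : G) : G ⧸ H) = QuotientGroup.mk '' (K : Set G) := by
    ext q
    simp [MulAction.mem_orbit_iff, hsmul]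
  rw [Subgroup.relIndex, hstab, MulAction.index_stabilizer, horbit]

end

theorem stmt2 {G : Type*} [Group G] (H₁ H₂ : Subgroup G) (h : H₁ ≤ H₂) :
    EquivBdd (H₁ : Set G) (H₂ : Set G) ↔ H₁.relIndex H₂ ≠ 0 := by
  rw [EquivBdd, and_iff_right (bdd_of_subset h), bdd_subgroup_iff_finite_image_mk,
    Subgroup.relIndex_eq_ncard_image_mk]
  exact ⟨fun hfin => Set.ncard_ne_zero_of_mem ⟨1, H₂.one_mem, rfl⟩ hfin,
    Set.finite_of_ncard_ne_zero⟩
end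

section
/- Let G act on a locally compact Hausdorff space X. If C₀(X) ⋊ᵣ G is prime, then the action of G on X is topologically transitive (for all nonempty open U, V ⊆ X there exists g ∈ G with g.U ∩ V ≠ ∅). -/
/-!
If `g • U ∩ V = ∅` for all `g`, take nonzero `f_U, f_V ∈ C₀(X)` supported in `U` and `V`.
Covariance lets `u g` pass `π f_U` as the translate `g · f_U`, supported in `g • U`, so
`π f_V (π h u g) π f_U = π (f_V h (g · f_U)) u g = 0`. By density of the span of the `π h u g`,
`π f_V * c * π f_U = 0` for every `c`, and primeness forces `f_U = 0` or `f_V = 0`.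
-/

open scoped ZeroAtInfty Pointwise

theorem ZeroAtInftyContinuousMap.exists_ne_zero_support_subset {X : Type*} [TopologicalSpace X]
    [T2Space X] [LocallyCompactSpace X] {W : Set X} (hW : IsOpen W) (hne : W.Nonempty) :
    ∃ f : C₀(X, ℂ), f ≠ 0 ∧ Function.support f ⊆ W := by
  obtain ⟨x₀, hx₀⟩ := hne
  obtain ⟨f, hf_one, hf_zero, hf_supp, -⟩ := exists_continuous_one_zero_of_isCompact
    isCompact_singleton hW.isClosed_compl (Set.disjoint_singleton_left.mpr (not_not.mpr hx₀))
  let F : C₀(X, ℂ) :=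
    ⟨(ContinuousMap.mk ((↑) : ℝ → ℂ) Complex.continuous_ofReal).comp f,
      (hf_supp.comp_left Complex.ofReal_zero).is_zero_at_infty⟩
  refine ⟨F, fun hF => ?_, fun x hx => ?_⟩
  · have : (f x₀ : ℂ) = 0 := DFunLike.congr_fun hF x₀
    simp [hf_one rfl] at this
  · by_contra hxW
    exact hx (by change ((f x : ℝ) : ℂ) = 0; simp [hf_zero hxW])

theorem mul_eq_mul_of_mul_mul_eq {M : Type*} [Monoid M] {u v a b : M} (hvu : v * u = 1)
    (h : u * a * v = b) : u * a = b * u := by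
  rw [← h, mul_assoc _ v, hvu, mul_one]

theorem mul_mul_eq_zero_of_dense_span {R A : Type*} [CommSemiring R] [NonUnitalRing A]
    [Module R A] [IsScalarTower R A A] [SMulCommClass R A A] [TopologicalSpace A]
    [IsTopologicalRing A] [T2Space A] {S : Set A} (hS : Dense (Submodule.span R S : Set A))
    {a b : A} (h : ∀ s ∈ S, a * s * b = 0) (c : A) : a * c * b = 0 := by
  refine hS.induction (fun c hc => ?_) (isClosed_eq (by fun_prop) continuous_const) c
  induction hc using Submodule.span_induction with
  | mem s hs => exact h s hs
  | zero => simp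
  | add x y _ _ hx hy => rw [mul_add, add_mul, hx, hy, add_zero]
  | smul r x _ hx => rw [mul_smul_comm, smul_mul_assoc, hx, smul_zero]

section Covariant

variable {G X A : Type*} [Group G] [TopologicalSpace X] [MulAction G X] [ContinuousConstSMul G X]
  [Ring A] [StarRing A] [Module ℂ A]

noncomputable def ZeroAtInftyContinuousMap.translate (g : G) (f : C₀(X, ℂ)) : C₀(X, ℂ) :=
  f.comp (Homeomorph.smul g⁻¹).toCocompactMap

theorem mul_mul_mul_eq_zero_of_translate_disjoint (π : C₀(X, ℂ) →⋆ₙₐ[ℂ] A) (u : G → A)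
    (hu : ∀ g, u g ∈ unitary A)
    (hcov : ∀ (g : G) (f f' : C₀(X, ℂ)), (∀ x : X, f' x = f (g⁻¹ • x)) →
      u g * π f * star (u g) = π f')
    {f₁ f₂ : C₀(X, ℂ)} (hdisj : ∀ (g : G) (x : X), f₁ x = 0 ∨ f₂ (g⁻¹ • x) = 0)
    (h : C₀(X, ℂ)) (g : G) :
    π f₁ * (π h * u g) * π f₂ = 0 := by
  set f₂' := f₂.translate g
  have hcomm : u g * π f₂ = π f₂' * u g :=
    mul_eq_mul_of_mul_mul_eq (Unitary.star_mul_self_of_mem (hu g)) (hcov g f₂ f₂' fun _ => rfl)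
  have hprod : f₁ * h * f₂' = 0 := by
    ext x
    rcases hdisj g x with hx | hx <;> simp [f₂', ZeroAtInftyContinuousMap.translate, hx]
  calc π f₁ * (π h * u g) * π f₂ = π (f₁ * h * f₂') * u g := by
        simp only [map_mul, mul_assoc, hcomm]
    _ = 0 := by rw [hprod, map_zero, zero_mul]

end Covariant

theorem stmt6_general {G X A : Type*} [Group G]
    [TopologicalSpace X] [LocallyCompactSpace X] [T2Space X] [MulAction G X]
    (hcont : ∀ g : G, Continuous fun x : X => g • x)
    [NormedRing A] [StarRing A] [NormedAlgebra ℂ A]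
    -- the reduced crossed product `C₀(X) ⋊ᵣ G`, presented abstractly:
    (π : C₀(X, ℂ) →⋆ₙₐ[ℂ] A) (hπ : Function.Injective π)
    (u : G → A) (hu : ∀ g, u g ∈ unitary A)
    (hcov : ∀ (g : G) (f f' : C₀(X, ℂ)), (∀ x : X, f' x = f (g⁻¹ • x)) →
      u g * π f * star (u g) = π f')
    (hdense : Dense (Submodule.span ℂ
      {a : A | ∃ (f : C₀(X, ℂ)) (g : G), a = π f * u g} : Set A))
    -- primeness of the crossed product
    (hprime : ∀ a b : A, (∀ c : A, a * c * b = 0) → a = 0 ∨ b = 0) :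
    -- topological transitivity
    ∀ U V : Set X, IsOpen U → U.Nonempty → IsOpen V → V.Nonempty →
      ∃ g : G, (g • U ∩ V).Nonempty := by
  intro U V hU hUne hV hVne
  by_contra! hdisj
  have : ContinuousConstSMul G X := ⟨hcont⟩
  obtain ⟨fU, hfU, hfU_supp⟩ := ZeroAtInftyContinuousMap.exists_ne_zero_support_subset hU hUne
  obtain ⟨fV, hfV, hfV_supp⟩ := ZeroAtInftyContinuousMap.exists_ne_zero_support_subset hV hVne
  have hsupp : ∀ (g : G) (x : X), fV x = 0 ∨ fU (g⁻¹ • x) = 0 := by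
    refine fun g x => or_iff_not_and_not.mpr fun ⟨hxV, hxU⟩ => (hdisj g).subset ⟨?_, hfV_supp hxV⟩
    exact Set.mem_smul_set_iff_inv_smul_mem.mpr (hfU_supp hxU)
  have hzero : ∀ c, π fV * c * π fU = 0 := mul_mul_eq_zero_of_dense_span hdense <| by
    rintro _ ⟨h, g, rfl⟩
    exact mul_mul_mul_eq_zero_of_translate_disjoint π u hu hcov hsupp h g
  rcases hprime _ _ hzero with h | h
  · exact hfV ((map_eq_zero_iff π hπ).mp h)
  · exact hfU ((map_eq_zero_iff π hπ).mp h)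

theorem stmt6 {G X A : Type*} [Group G] [Countable G]
    [TopologicalSpace X] [LocallyCompactSpace X] [T2Space X] [MulAction G X]
    (hcont : ∀ g : G, Continuous fun x : X => g • x)
    [NormedRing A] [StarRing A] [CStarRing A] [NormedAlgebra ℂ A] [CompleteSpace A]
    [StarModule ℂ A]
    -- the reduced crossed product `C₀(X) ⋊ᵣ G`, presented abstractly:
    (π : C₀(X, ℂ) →⋆ₙₐ[ℂ] A) (hπ : Function.Injective π)
    (u : G → A) (hu : ∀ g, u g ∈ unitary A)
    (humul : ∀ g h : G, u (g * h) = u g * u h)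
    (hcov : ∀ (g : G) (f f' : C₀(X, ℂ)), (∀ x : X, f' x = f (g⁻¹ • x)) →
      u g * π f * star (u g) = π f')
    (hdense : Dense (Submodule.span ℂ
      {a : A | ∃ (f : C₀(X, ℂ)) (g : G), a = π f * u g} : Set A))
    -- primeness of the crossed product
    (hprime : ∀ a b : A, (∀ c : A, a * c * b = 0) → a = 0 ∨ b = 0) :
    -- topological transitivity
    ∀ U V : Set X, IsOpen U → U.Nonempty → IsOpen V → V.Nonempty →
      ∃ g : G, (g • U ∩ V).Nonempty :=
  stmt6_general hcont π hπ u hu hcov hdense hprime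
end

section
/- Every countable infinite group G admits a sequence I₁, I₂, I₃, … of infinite subsets of G, each containing the identity e, such that for every n the product map Φₙ : Iₙ × ⋯ × I₂ × I₁ → G, Φₙ(gₙ, …, g₂, g₁) = gₙ⋯g₂g₁, is injective. -/
/-!
Let `Z` be the FC-center of `G`: the elements whose centralizer has finite index. The sets
`I₀, I₁, …` are built by adding one new element `ξ` at a time to one of them, interleaved so that
each set receives infinitely many elements, while keeping products of words unique modulo a
subgroup `K`. Comparing a word through the new element `ξ` with another word gives either an
equation `ξ = w` or a conjugacy equation `ξ u ξ⁻¹ = w`, with `u, w` from finite sets.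

If `Z` is finite, take `K = Z`. For `u ∉ Z` the solutions of `ξ u ξ⁻¹ = w` form a coset of the
infinite-index subgroup `centralizer {u}`, and by B. H. Neumann's lemma finitely many such cosets
and finitely many points never cover `G`. If `Z` is infinite, take `K = 1` and choose `ξ ∈ Z`
commuting with all earlier elements, possible because their centralizers have finite index; then
`ξ` cancels from the conjugacy equations.
-/

open Subgroup Function
open scoped Pointwise

section FCCenter

variable {G : Type*} [Group G]

def fcCenter (G : Type*) [Group G] : Subgroup G where
  carrier := {u | (centralizer {u}).FiniteIndex}
  one_mem' := by
    show (centralizer {1}).FiniteIndex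
    rw [centralizer_eq_top_iff_subset.mpr (by simp)]
    infer_instance
  mul_mem' {u v} (hu : (centralizer {u}).FiniteIndex) (hv : (centralizer {v}).FiniteIndex) :=
    finiteIndex_of_le (H := centralizer {u} ⊓ centralizer {v}) fun x ⟨hxu, hxv⟩ =>
      mem_centralizer_singleton_iff.mpr <| Commute.mul_right
        (mem_centralizer_singleton_iff.mp hxu) (mem_centralizer_singleton_iff.mp hxv)
  inv_mem' {u} (hu : (centralizer {u}).FiniteIndex) :=
    finiteIndex_of_le (H := centralizer {u}) fun x hx =>
      mem_centralizer_singleton_iff.mpr (Commute.inv_right (mem_centralizer_singleton_iff.mp hx))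

theorem mem_fcCenter {u : G} : u ∈ fcCenter G ↔ (centralizer {u}).FiniteIndex := Iff.rfl

theorem finiteIndex_centralizer_of_subset_fcCenter {S : Set G} (hS : S.Finite)
    (hSZ : S ⊆ fcCenter G) : (centralizer S).FiniteIndex := by
  rw [centralizer_eq_iInf]
  simp_rw [← hS.mem_toFinset]
  exact finiteIndex_iInf' _ fun u hu => mem_fcCenter.mp (hSZ (hS.mem_toFinset.mp hu))

theorem Subgroup.infinite_inf_of_finiteIndex {H C : Subgroup G} [C.FiniteIndex]
    (hH : (H : Set G).Infinite) : ((H ⊓ C : Subgroup G) : Set G).Infinite := by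
  intro hfin
  have : Finite (C.subgroupOf H) := by
    refine Set.Finite.to_subtype ?_
    rw [coe_subgroupOf]
    exact (hfin.preimage Subtype.val_injective.injOn).subset fun x hx => ⟨x.2, hx⟩
  exact hH (Set.finite_coe_iff.mp
    ((finite_iff_finite_and_finiteIndex (C.subgroupOf H)).mpr ⟨this, inferInstance⟩))

theorem exists_notMem_forall_conj_ne [Infinite G] {E U W : Set G} (hE : E.Finite)
    (hU : U.Finite) (hW : W.Finite) (hUW : ∀ u ∈ U, ¬(centralizer {u}).FiniteIndex) :
    ∃ ξ ∉ E, ∀ u ∈ U, ∀ w ∈ W, ξ * u * ξ⁻¹ ≠ w := by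
  classical
  by_contra! hcover
  let sol (p : G × G) : G := Classical.epsilon fun ζ => ζ * p.1 * ζ⁻¹ = p.2
  -- points of `E` are cosets of `⊥`; the solutions of `ξ u ξ⁻¹ = w` a coset of `centralizer {u}`
  let s : Finset (G × Subgroup G) := hE.toFinset.image (fun e => (e, ⊥)) ∪
    (hU.prod hW).toFinset.image fun p => (sol p, centralizer {p.1})
  have hs : ⋃ i ∈ s, i.1 • (i.2 : Set G) = Set.univ := by
    refine Set.eq_univ_of_forall fun ξ => ?_
    by_cases hξ : ξ ∈ E
    · refine Set.mem_biUnion (x := (ξ, ⊥)) (by simp [s, hξ]) ?_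
      simp
    · obtain ⟨u, hu, w, hw, hξuw⟩ := hcover ξ hξ
      have hsol : sol (u, w) * u * (sol (u, w))⁻¹ = w :=
        Classical.epsilon_spec (p := fun ζ => ζ * u * ζ⁻¹ = w) ⟨ξ, hξuw⟩
      refine Set.mem_biUnion (x := (sol (u, w), centralizer {u}))
        (Finset.mem_union_right _ (Finset.mem_image.mpr ⟨(u, w), by simp [hu, hw], rfl⟩)) ?_
      rw [mem_leftCoset_iff, SetLike.mem_coe, mem_centralizer_singleton_iff]
      rw [← hsol] at hξuw
      simpa [mul_assoc] using congr((sol (u, w))⁻¹ * $hξuw * ξ)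
  obtain ⟨⟨ζ, H⟩, hmem, hH⟩ := exists_finiteIndex_of_leftCoset_cover hs
  simp only [s, Finset.mem_union, Finset.mem_image] at hmem
  rcases hmem with ⟨e, -, he⟩ | ⟨⟨u, w⟩, huw, he⟩ <;> cases he
  · exact not_finiteIndex_iff.mpr (by simp [index_bot]) hH
  · exact hUW u (by simp at huw; exact huw.1) hH

end FCCenter

namespace UniqueFactorization

theorem exists_monotone_infinite_of_forall_exists_insert {α : Type*} (P : Set (ℕ × α) → Prop)
    (h0 : P ∅) (hstep : ∀ s, s.Finite → P s → ∀ m, ∃ x, (m, x) ∉ s ∧ P (insert (m, x) s)) :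
    ∃ S : ℕ → Set (ℕ × α), Monotone S ∧ (∀ k, P (S k)) ∧
      ∀ m, {x | (m, x) ∈ ⋃ k, S k}.Infinite := by
  have : Nonempty α := ⟨(hstep ∅ Set.finite_empty h0 0).choose⟩
  choose! x hx using hstep
  -- stage `k` serves the layer `(Nat.unpair k).1`, so every layer is served infinitely often
  let S (k : ℕ) : Set (ℕ × α) :=
    Nat.rec ∅ (fun k s => insert (k.unpair.1, x s k.unpair.1) s) k
  have hS_succ (k : ℕ) : S (k + 1) = insert (k.unpair.1, x (S k) k.unpair.1) (S k) := rfl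
  have hS (k : ℕ) : (S k).Finite ∧ P (S k) := by
    induction k with
    | zero => exact ⟨Set.finite_empty, h0⟩
    | succ k ih => exact ⟨hS_succ k ▸ ih.1.insert _, hS_succ k ▸ (hx _ ih.1 ih.2 _).2⟩
  have hmono : Monotone S := monotone_nat_of_le_succ fun k => hS_succ k ▸ Set.subset_insert _ _
  refine ⟨S, hmono, fun k => (hS k).2, fun m => ?_⟩
  let y (i : ℕ) : α := x (S (Nat.pair m i)) m
  have hy_mem (i : ℕ) : (m, y i) ∈ S (Nat.pair m i + 1) := by
    simp [hS_succ, y, Nat.unpair_pair]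
  have hy_fresh (i : ℕ) : (m, y i) ∉ S (Nat.pair m i) := by
    simpa [Nat.unpair_pair] using (hx _ (hS (Nat.pair m i)).1 (hS (Nat.pair m i)).2 m).1
  have hy_ne {i j : ℕ} (hij : Nat.pair m i < Nat.pair m j) : y i ≠ y j := fun hyij =>
    hy_fresh j (hyij ▸ hmono hij (hy_mem i))
  refine Set.infinite_of_injective_forall_mem (f := y) (fun i j hyij => ?_)
    fun i => Set.mem_iUnion_of_mem (Nat.pair m i + 1) (hy_mem i)
  by_contra hij
  have hpair : Nat.pair m i ≠ Nat.pair m j := by simpa [Nat.pair_eq_pair] using hij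
  rcases hpair.lt_or_gt with hlt | hlt
  · exact hy_ne hlt hyij
  · exact hy_ne hlt hyij.symm

def IsWord {α : Type*} (F : ℕ → Set α) (n : ℕ) (g : ℕ → α) : Prop := ∀ i < n, g i ∈ F i

theorem IsWord.of_le {α : Type*} {F : ℕ → Set α} {m n : ℕ} {g : ℕ → α} (hg : IsWord F n g)
    (hmn : m ≤ n) : IsWord F m g :=
  fun i hi => hg i (by omega)

section Monoid

variable {M : Type*} [Monoid M]

def prefixProd (g : ℕ → M) : ℕ → M
  | 0 => 1
  | n + 1 => g n * prefixProd g n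

theorem prod_reverse_ofFn_eq_prefixProd (g : ℕ → M) (n : ℕ) :
    (List.ofFn fun i : Fin n => g i).reverse.prod = prefixProd g n := by
  induction n with
  | zero => rfl
  | succ n ih =>
    rw [List.ofFn_succ', List.concat_eq_append, List.reverse_append]
    simp [ih, prefixProd]

theorem prefixProd_congr {g h : ℕ → M} {n : ℕ} (hgh : ∀ i < n, g i = h i) :
    prefixProd g n = prefixProd h n := by
  induction n with
  | zero => rfl
  | succ n ih =>
    rw [prefixProd, prefixProd, hgh n n.lt_succ_self, ih fun i hi => hgh i (by omega)]

theorem prefixProd_eq_of_forall_ge {g : ℕ → M} {a n : ℕ} (hg : ∀ i, a ≤ i → g i = 1)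
    (han : a ≤ n) : prefixProd g n = prefixProd g a := by
  induction n, han using Nat.le_induction with
  | base => rfl
  | succ n han ih => rw [prefixProd, hg n han, one_mul, ih]

theorem prefixProd_mem {S : Type*} [SetLike S M] [SubmonoidClass S M] {H : S} {g : ℕ → M}
    {n : ℕ} (hg : ∀ i < n, g i ∈ H) : prefixProd g n ∈ H := by
  induction n with
  | zero => exact one_mem H
  | succ n ih => exact mul_mem (hg n n.lt_succ_self) (ih fun i hi => hg i (by omega))

def wordValues (F : ℕ → Set M) : Set M := {x | ∃ n g, IsWord F n g ∧ prefixProd g n = x}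

theorem prefixProd_mem_wordValues {F : ℕ → Set M} {n : ℕ} {g : ℕ → M} (hg : IsWord F n g) :
    prefixProd g n ∈ wordValues F :=
  ⟨n, g, hg, rfl⟩

theorem finite_setOf_prefixProd {F : ℕ → Set M} (hF : ∀ i, (F i).Finite) (n : ℕ) :
    {x | ∃ g, IsWord F n g ∧ prefixProd g n = x}.Finite := by
  induction n with
  | zero => exact (Set.finite_singleton 1).subset fun x ⟨g, _, hx⟩ => hx.symm
  | succ n ih =>
    refine ((hF n).mul ih).subset fun x ⟨g, hg, hx⟩ => hx ▸ ?_
    exact Set.mul_mem_mul (hg n n.lt_succ_self) ⟨g, hg.of_le n.le_succ, rfl⟩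

theorem finite_wordValues {F : ℕ → Set M} (hF : ∀ i, (F i).Finite) (h1 : ∀ i, 1 ∈ F i) {N : ℕ}
    (hN : ∀ i, N ≤ i → F i ⊆ {1}) : (wordValues F).Finite := by
  classical
  refine (finite_setOf_prefixProd hF N).subset fun x ⟨n, g, hg, hx⟩ => ?_
  -- pad or truncate the word to length `N`; all letters from position `min n N` on are `1`
  let g' i := if i < n then g i else 1
  have hg' : ∀ i, min n N ≤ i → g' i = 1 := fun i hi => by
    by_cases hin : i < n
    · simpa [g', hin] using hN i (by omega) (hg i hin)
    · simp [g', hin]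
  refine ⟨g', fun i _ => ?_, ?_⟩
  · by_cases hin : i < n
    · simpa [g', hin] using hg i hin
    · simpa [g', hin] using h1 i
  · rw [prefixProd_eq_of_forall_ge hg' (min_le_right n N), ← hx,
      ← prefixProd_eq_of_forall_ge hg' (min_le_left n N)]
    exact prefixProd_congr fun i hi => if_pos hi

def layer (s : Set (ℕ × M)) (i : ℕ) : Set M := insert 1 {x | (i, x) ∈ s}

theorem one_mem_layer (s : Set (ℕ × M)) (i : ℕ) : 1 ∈ layer s i := Set.mem_insert _ _

theorem layer_mono {s t : Set (ℕ × M)} (hst : s ⊆ t) (i : ℕ) : layer s i ⊆ layer t i :=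
  Set.insert_subset_insert fun _ hx => hst hx

theorem finite_layer {s : Set (ℕ × M)} (hs : s.Finite) (i : ℕ) : (layer s i).Finite :=
  ((hs.image Prod.snd).insert 1).subset (Set.insert_subset_insert fun x hx => ⟨(i, x), hx, rfl⟩)

theorem finite_wordValues_layer {s : Set (ℕ × M)} (hs : s.Finite) :
    (wordValues (layer s)).Finite := by
  obtain ⟨N, hN⟩ := (hs.image Prod.fst).bddAbove
  refine finite_wordValues (finite_layer hs) (one_mem_layer s) (N := N + 1) fun i hi x hx => ?_
  rcases hx with rfl | hx
  · rfl
  · exact absurd (hN ⟨(i, x), hx, rfl⟩) (by omega)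

theorem IsWord.exists_of_layer_iUnion {S : ℕ → Set (ℕ × M)} (hS : Monotone S) {n : ℕ}
    {g : ℕ → M} (hg : IsWord (layer (⋃ k, S k)) n g) : ∃ k, IsWord (layer (S k)) n g := by
  induction n with
  | zero => exact ⟨0, fun i hi => absurd hi i.not_lt_zero⟩
  | succ n ih =>
    obtain ⟨k, hk⟩ := ih (hg.of_le n.le_succ)
    obtain ⟨k', hk'⟩ : ∃ k', g n ∈ layer (S k') n := by
      rcases hg n n.lt_succ_self with h1 | hx
      · exact ⟨0, .inl h1⟩
      · obtain ⟨k', hk'⟩ := Set.mem_iUnion.mp hx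
        exact ⟨k', .inr hk'⟩
    refine ⟨max k k', fun i hi => ?_⟩
    rcases Nat.lt_succ_iff_lt_or_eq.mp hi with hi | rfl
    · exact layer_mono (hS (le_max_left k k')) i (hk i hi)
    · exact layer_mono (hS (le_max_right k k')) i hk'

theorem IsWord.layer_insert {s : Set (ℕ × M)} {m n : ℕ} {ξ : M} {g : ℕ → M}
    (hg : IsWord (layer (insert (m, ξ) s)) n g) :
    IsWord (layer s) n g ∨ m < n ∧ g m = ξ ∧ IsWord (layer s) n (update g m 1) := by
  by_cases hold : IsWord (layer s) n g
  · exact .inl hold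
  obtain ⟨i, hin, hi⟩ : ∃ i < n, g i ∉ layer s i := by simpa [IsWord] using hold
  obtain ⟨rfl, hgi⟩ : i = m ∧ g i = ξ := by
    rcases hg i hin with h1 | h | h
    · exact absurd (h1 ▸ one_mem_layer s i) hi
    · simpa using h
    · exact absurd (Or.inr h) hi
  refine .inr ⟨hin, hgi, fun j hj => ?_⟩
  rcases eq_or_ne j i with rfl | hji
  · simpa using one_mem_layer s j
  rw [update_of_ne hji]
  rcases hg j hj with h1 | h | h
  · exact Or.inl h1
  · exact absurd (Prod.ext_iff.mp h).1 hji
  · exact Or.inr h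

end Monoid

section Group

variable {G : Type*} [Group G]

theorem prefixProd_update {g : ℕ → G} {m n : ℕ} (hmn : m < n) (hg : g m = 1) (x : G) :
    prefixProd (update g m x) n = prefixProd g n * (prefixProd g m)⁻¹ * x * prefixProd g m := by
  have hbelow : prefixProd (update g m x) m = prefixProd g m :=
    prefixProd_congr fun i hi => update_of_ne hi.ne _ _
  induction n, hmn using Nat.le_induction with
  | base => simp [prefixProd, hbelow, hg]
  | succ n hmn ih =>
    rw [prefixProd, prefixProd, ih, update_of_ne (by omega)]
    group

def UniqueProdModulo (K : Subgroup G) (F : ℕ → Set G) : Prop :=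
  ∀ n g h, IsWord F n g → IsWord F n h → prefixProd g n * (prefixProd h n)⁻¹ ∈ K →
    ∀ i < n, g i = h i

theorem UniqueProdModulo.mono {K L : Subgroup G} {F : ℕ → Set G} (hF : UniqueProdModulo L F)
    (hKL : K ≤ L) : UniqueProdModulo K F :=
  fun n g h hg hh hgh => hF n g h hg hh (hKL hgh)

theorem uniqueProdModulo_layer_empty (K : Subgroup G) :
    UniqueProdModulo K (layer (∅ : Set (ℕ × G))) :=
  fun n g h hg hh _ i hi => by
    have hg := hg i hi
    have hh := hh i hi
    simp_all [layer]

theorem UniqueProdModulo.layer_iUnion {K : Subgroup G} {S : ℕ → Set (ℕ × G)} (hS : Monotone S)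
    (hK : ∀ k, UniqueProdModulo K (layer (S k))) : UniqueProdModulo K (layer (⋃ k, S k)) := by
  intro n g h hg hh hgh
  obtain ⟨k, hk⟩ := IsWord.exists_of_layer_iUnion hS hg
  obtain ⟨k', hk'⟩ := IsWord.exists_of_layer_iUnion hS hh
  exact hK (max k k') n g h (fun i hi => layer_mono (hS (le_max_left k k')) i (hk i hi))
    (fun i hi => layer_mono (hS (le_max_right k k')) i (hk' i hi)) hgh

/-- A word through `ξ` that is congruent modulo `K` to a word avoiding `ξ` forces `ξ` into this
set. -/
def exceptionalSet (K : Subgroup G) (F : ℕ → Set G) : Set G :=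
  wordValues F * (wordValues F)⁻¹ * K * wordValues F * (wordValues F)⁻¹

theorem mul_mem_exceptionalSet {K : Subgroup G} {F : ℕ → Set G} {a b c d k : G}
    (ha : a ∈ wordValues F) (hb : b ∈ wordValues F) (hk : k ∈ K) (hc : c ∈ wordValues F)
    (hd : d ∈ wordValues F) : a * b⁻¹ * k * c * d⁻¹ ∈ exceptionalSet K F :=
  Set.mul_mem_mul (Set.mul_mem_mul (Set.mul_mem_mul (Set.mul_mem_mul ha (Set.inv_mem_inv.mpr hb))
    hk) hc) (Set.inv_mem_inv.mpr hd)

theorem finite_exceptionalSet {K : Subgroup G} {F : ℕ → Set G} (hK : (K : Set G).Finite)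
    (hF : (wordValues F).Finite) : (exceptionalSet K F).Finite :=
  (((hF.mul hF.inv).mul hK).mul hF).mul hF.inv

theorem mem_exceptionalSet_of_prefixProd_update {K : Subgroup G} {F : ℕ → Set G} {m n : ℕ}
    {g h : ℕ → G} {ξ : G} (hmn : m < n) (hg : IsWord F n g) (hgm : g m = 1) (hh : IsWord F n h)
    (hK : prefixProd (update g m ξ) n * (prefixProd h n)⁻¹ ∈ K) : ξ ∈ exceptionalSet K F := by
  rw [prefixProd_update hmn hgm] at hK
  have hB := prefixProd_mem_wordValues (hg.of_le hmn.le)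
  convert mul_mem_exceptionalSet hB (prefixProd_mem_wordValues hg) hK
    (prefixProd_mem_wordValues hh) hB using 1
  group

def ReflectsInsertion (K : Subgroup G) (F : ℕ → Set G) (m : ℕ) (ξ : G) : Prop :=
  ∀ n g h, m < n → IsWord F n g → IsWord F n h → g m = 1 → h m = 1 →
    prefixProd (update g m ξ) n * (prefixProd (update h m ξ) n)⁻¹ ∈ K →
    prefixProd g n * (prefixProd h n)⁻¹ ∈ K

theorem UniqueProdModulo.layer_insert {K : Subgroup G} {s : Set (ℕ × G)} {m : ℕ} {ξ : G}
    (hs : UniqueProdModulo K (layer s)) (hξ : ξ ∉ exceptionalSet K (layer s))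
    (hrefl : ReflectsInsertion K (layer s) m ξ) :
    UniqueProdModulo K (layer (insert (m, ξ) s)) := by
  intro n g h hg hh hgh
  rcases hg.layer_insert with hg | ⟨hmn, hgm, hg'⟩ <;>
    rcases hh.layer_insert with hh | ⟨hmn, hhm, hh'⟩
  · exact hs n g h hg hh hgh
  · refine absurd (mem_exceptionalSet_of_prefixProd_update hmn hh' (update_self ..) hg ?_) hξ
    rw [update_idem, ← hhm, update_eq_self, ← inv_mem_iff, mul_inv_rev, inv_inv]
    exact hgh
  · refine absurd (mem_exceptionalSet_of_prefixProd_update hmn hg' (update_self ..) hh ?_) hξ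
    rwa [update_idem, ← hgm, update_eq_self]
  · have hrefl := hrefl n _ _ hmn hg' hh' (update_self ..) (update_self ..)
    rw [update_idem, update_idem, ← hgm, update_eq_self, hgm, ← hhm, update_eq_self] at hrefl
    intro i hi
    rcases eq_or_ne i m with rfl | him
    · rw [hgm, hhm]
    · simpa [update_of_ne him] using hs n _ _ hg' hh' (hrefl hgh) i hi

theorem reflectsInsertion_of_forall_conj_ne {K : Subgroup G} {F : ℕ → Set G} {m : ℕ} {ξ : G}
    (hF : UniqueProdModulo K F)
    (hξ : ∀ u ∈ wordValues F * (wordValues F)⁻¹, u ∉ K →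
      ∀ w ∈ exceptionalSet K F, ξ * u * ξ⁻¹ ≠ w) :
    ReflectsInsertion K F m ξ := by
  intro n g h hmn hg hh hgm hhm hK
  rw [prefixProd_update hmn hgm, prefixProd_update hmn hhm] at hK
  -- either the prefixes below `m` are congruent, hence equal, or `ξ` solves a forbidden equation
  by_cases hu : prefixProd g m * (prefixProd h m)⁻¹ ∈ K
  · have hgh : prefixProd g m = prefixProd h m :=
      prefixProd_congr (hF m g h (hg.of_le hmn.le) (hh.of_le hmn.le) hu)
    rw [hgh] at hK
    convert hK using 1
    group
  · have hB := prefixProd_mem_wordValues (hg.of_le hmn.le)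
    have hD := prefixProd_mem_wordValues (hh.of_le hmn.le)
    refine absurd ?_ (hξ _ (Set.mul_mem_mul hB (Set.inv_mem_inv.mpr hD)) hu _
      (mul_mem_exceptionalSet hB (prefixProd_mem_wordValues hg) hK
        (prefixProd_mem_wordValues hh) hD))
    group

theorem reflectsInsertion_of_commute {K : Subgroup G} {F : ℕ → Set G} {m : ℕ} {ξ : G}
    (hξ : ∀ i, ∀ x ∈ F i, Commute ξ x) : ReflectsInsertion K F m ξ := by
  have hinsert : ∀ n g, m < n → IsWord F n g → g m = 1 →
      prefixProd (update g m ξ) n = prefixProd g n * ξ := fun n g hmn hg hgm => by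
    have hB : prefixProd g m ∈ centralizer {ξ} :=
      prefixProd_mem fun i hi => mem_centralizer_singleton_iff.mpr (hξ i _ (hg i (by omega))).symm
    rw [prefixProd_update hmn hgm, mul_assoc _ ξ, (mem_centralizer_singleton_iff.mp hB).symm]
    group
  intro n g h hmn hg hh hgm hhm hK
  rw [hinsert n g hmn hg hgm, hinsert n h hmn hh hhm] at hK
  convert hK using 1
  group

theorem exists_insert_of_finite_fcCenter [Infinite G] (hZ : (fcCenter G : Set G).Finite)
    {s : Set (ℕ × G)} (hs : s.Finite) (hF : UniqueProdModulo (fcCenter G) (layer s)) (m : ℕ) :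
    ∃ ξ, (m, ξ) ∉ s ∧ UniqueProdModulo (fcCenter G) (layer (insert (m, ξ) s)) := by
  have hV := finite_wordValues_layer hs
  have hE := finite_exceptionalSet hZ hV
  obtain ⟨ξ, hξ, hconj⟩ := exists_notMem_forall_conj_ne (hE.union (finite_layer hs m))
    ((hV.mul hV.inv).subset (Set.sdiff_subset (t := fcCenter G))) hE
    fun u hu => mem_fcCenter.not.mp hu.2
  exact ⟨ξ, fun h => hξ (.inr (.inr h)), hF.layer_insert (fun h => hξ (.inl h))
    (reflectsInsertion_of_forall_conj_ne hF fun u hu huZ => hconj u ⟨hu, huZ⟩)⟩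

theorem exists_insert_of_infinite_fcCenter (hZ : (fcCenter G : Set G).Infinite)
    {s : Set (ℕ × G)} (hs : s.Finite) (hsZ : ∀ p ∈ s, p.2 ∈ fcCenter G)
    (hF : UniqueProdModulo ⊥ (layer s)) (m : ℕ) :
    ∃ ξ ∈ fcCenter G, (m, ξ) ∉ s ∧ UniqueProdModulo ⊥ (layer (insert (m, ξ) s)) := by
  have := finiteIndex_centralizer_of_subset_fcCenter (hs.image Prod.snd)
    (by rintro _ ⟨p, hp, rfl⟩; exact hsZ p hp)
  have hE := finite_exceptionalSet (K := ⊥) (by simp) (finite_wordValues_layer hs)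
  obtain ⟨ξ, ⟨hξZ, hξC⟩, hξ⟩ :=
    ((Subgroup.infinite_inf_of_finiteIndex (C := centralizer (Prod.snd '' s)) hZ).sdiff
      (hE.union (finite_layer hs m))).nonempty
  have hcomm (i : ℕ) (x : G) (hx : x ∈ layer s i) : Commute ξ x := by
    rcases hx with rfl | hx
    · exact Commute.one_right ξ
    · exact (mem_centralizer_iff.mp hξC x ⟨(i, x), hx, rfl⟩).symm
  exact ⟨ξ, hξZ, fun h => hξ (.inr (.inr h)),
    hF.layer_insert (fun h => hξ (.inl h)) (reflectsInsertion_of_commute hcomm)⟩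

theorem exists_layer_infinite_uniqueProdModulo_bot [Infinite G] :
    ∃ S : Set (ℕ × G), (∀ m, (layer S m).Infinite) ∧ UniqueProdModulo ⊥ (layer S) := by
  by_cases hZ : (fcCenter G : Set G).Finite
  · obtain ⟨S, hmono, hS, hinf⟩ := exists_monotone_infinite_of_forall_exists_insert
      (fun s => UniqueProdModulo (fcCenter G) (layer s)) (uniqueProdModulo_layer_empty _)
      fun s hs hF m => exists_insert_of_finite_fcCenter hZ hs hF m
    exact ⟨⋃ k, S k, fun m => (hinf m).mono (Set.subset_insert _ _),
      (UniqueProdModulo.layer_iUnion hmono hS).mono bot_le⟩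
  · obtain ⟨S, hmono, hS, hinf⟩ := exists_monotone_infinite_of_forall_exists_insert
      (fun s => UniqueProdModulo ⊥ (layer s) ∧ ∀ p ∈ s, p.2 ∈ fcCenter G)
      ⟨uniqueProdModulo_layer_empty _, by simp⟩ fun s hs ⟨hF, hsZ⟩ m => by
        obtain ⟨ξ, hξZ, hξs, hF'⟩ := exists_insert_of_infinite_fcCenter hZ hs hsZ hF m
        refine ⟨ξ, hξs, hF', ?_⟩
        rintro p (rfl | hp)
        exacts [hξZ, hsZ p hp]
    exact ⟨⋃ k, S k, fun m => (hinf m).mono (Set.subset_insert _ _),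
      UniqueProdModulo.layer_iUnion hmono fun k => (hS k).1⟩

end Group

end UniqueFactorization

theorem stmt11_general {G : Type*} [Group G] [Infinite G] :
    ∃ I : ℕ → Set G, (∀ n, (I n).Infinite) ∧ (∀ n, (1 : G) ∈ I n) ∧
      ∀ (n : ℕ) (g h : Fin n → G), (∀ i : Fin n, g i ∈ I i.val) → (∀ i : Fin n, h i ∈ I i.val) →
        (List.ofFn g).reverse.prod = (List.ofFn h).reverse.prod → g = h := by
  open UniqueFactorization in
  obtain ⟨S, hinf, hunique⟩ := exists_layer_infinite_uniqueProdModulo_bot (G := G)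
  refine ⟨layer S, hinf, one_mem_layer S, fun n g h hg hh hgh => ?_⟩
  let extend (f : Fin n → G) (i : ℕ) : G := if hi : i < n then f ⟨i, hi⟩ else 1
  have hextend (f : Fin n → G) : (fun i : Fin n => extend f i) = f := funext fun i => dif_pos i.2
  have hword (f : Fin n → G) (hf : ∀ i : Fin n, f i ∈ layer S i) : IsWord (layer S) n (extend f) :=
    fun i hi => by simpa [extend, hi] using hf ⟨i, hi⟩
  rw [← hextend g, ← hextend h, prod_reverse_ofFn_eq_prefixProd,
    prod_reverse_ofFn_eq_prefixProd] at hgh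
  funext i
  simpa [extend] using hunique n _ _ (hword g hg) (hword h hh) (by simp [hgh]) i i.2

theorem stmt11 {G : Type*} [Group G] [Countable G] [Infinite G] :
    ∃ I : ℕ → Set G, (∀ n, (I n).Infinite) ∧ (∀ n, (1 : G) ∈ I n) ∧
      ∀ (n : ℕ) (g h : Fin n → G), (∀ i : Fin n, g i ∈ I i.val) → (∀ i : Fin n, h i ∈ I i.val) →
        (List.ofFn g).reverse.prod = (List.ofFn h).reverse.prod → g = h :=
  stmt11_general
end

section
/- Let G be a countable group with a proper right-invariant metric d, and let A ⊆ G be such that for every C < ∞ there exists g ∈ A with d(g, A \ {g}) > C. Then A is not 2-divisible: there do not exist disjoint subsets A₁, A₂ of A with A₁ ≈ A and A₂ ≈ A. -/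
open scoped Pointwise

/-! If `A ⊆ F * B` with `F` finite, right-invariance puts every point `f * b` of `A` within
distance `dist f 1` of `b ∈ B`, so `A` lies in a bounded neighbourhood of `B`. A point `g ∈ A`
isolated in `A` beyond that bound must then itself belong to every `Aᵢ ⊆ A` with `A ⊆ Fᵢ * Aᵢ`,
which is impossible for two disjoint `A₁`, `A₂`. -/

section RightInvariant

variable {G : Type*} [Group G] [MetricSpace G]

lemma dist_mul_self_eq_dist_one (hri : ∀ g h h' : G, dist (h * g) (h' * g) = dist h h') (f a : G) :
    dist (f * a) a = dist f 1 := by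
  simpa only [one_mul] using hri a f 1

lemma Bdd.exists_forall_exists_dist_le (hri : ∀ g h h' : G, dist (h * g) (h' * g) = dist h h')
    {A B : Set G} (hAB : Bdd A B) : ∃ C : ℝ, ∀ a ∈ A, ∃ b ∈ B, dist a b ≤ C := by
  obtain ⟨F, hF⟩ := hAB
  obtain ⟨C, hC⟩ := (F.image fun f => dist f 1).exists_le
  refine ⟨C, fun a ha => ?_⟩
  obtain ⟨f, hf, b, hb, rfl⟩ := hF ha
  exact ⟨b, hb, (dist_mul_self_eq_dist_one hri f b).trans_le (hC _ (Finset.mem_image_of_mem _ hf))⟩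

end RightInvariant

theorem stmt12_general {G : Type*} [Group G] [MetricSpace G]
    (hri : ∀ g h h' : G, dist (h * g) (h' * g) = dist h h')
    (A : Set G)
    (hA : ∀ C : ℝ, ∃ g ∈ A, ∀ h ∈ A, h ≠ g → C < dist g h) :
    ¬∃ A₁ A₂ : Set G, A₁ ⊆ A ∧ A₂ ⊆ A ∧ Disjoint A₁ A₂ ∧
      EquivBdd A₁ A ∧ EquivBdd A₂ A := by
  rintro ⟨A₁, A₂, hA₁, hA₂, hdisj, ⟨-, hbdd₁⟩, ⟨-, hbdd₂⟩⟩
  obtain ⟨C₁, hC₁⟩ := hbdd₁.exists_forall_exists_dist_le hri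
  obtain ⟨C₂, hC₂⟩ := hbdd₂.exists_forall_exists_dist_le hri
  obtain ⟨g, hg, hiso⟩ := hA (max C₁ C₂)
  have eq_of_near : ∀ a ∈ A, dist g a ≤ max C₁ C₂ → a = g := fun a ha hga =>
    by_contra fun hne => (hiso a ha hne).not_ge hga
  obtain ⟨a₁, ha₁, hga₁⟩ := hC₁ g hg
  obtain ⟨a₂, ha₂, hga₂⟩ := hC₂ g hg
  have h₁ : a₁ = g := eq_of_near a₁ (hA₁ ha₁) (hga₁.trans (le_max_left _ _))
  have h₂ : a₂ = g := eq_of_near a₂ (hA₂ ha₂) (hga₂.trans (le_max_right _ _))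
  exact hdisj.ne_of_mem ha₁ ha₂ (h₁.trans h₂.symm)

theorem stmt12 {G : Type*} [Group G] [Countable G] [MetricSpace G]
    (hri : ∀ g h h' : G, dist (h * g) (h' * g) = dist h h')
    (hproper : ∀ (h : G) (R : ℝ), {g : G | dist g h ≤ R}.Finite)
    (A : Set G)
    (hA : ∀ C : ℝ, ∃ g ∈ A, ∀ h ∈ A, h ≠ g → C < dist g h) :
    ¬∃ A₁ A₂ : Set G, A₁ ⊆ A ∧ A₂ ⊆ A ∧ Disjoint A₁ A₂ ∧
      EquivBdd A₁ A ∧ EquivBdd A₂ A :=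
  stmt12_general hri A hA
end

section
/- Every infinite countable group G contains an increasing sequence of subsets A₁ ⊆ A₂ ⊆ A₃ ⊆ ⋯ such that Aₙ₊₁ is not Aₙ-bounded (Aₙ₊₁ ⊄ FAₙ for every finite F ⊆ G) for all n. -/
open scoped Pointwise

open Filter

/-!
Choose a sequence `x` in `G` such that for each `g`, eventually in `j`, no `x j` lies in
`g * x i` for any `i ≠ j`; this is possible because each new term only has to avoid finitely
many translates of earlier terms. Split `ℕ` into the infinite columns of `Nat.pair` and let
`A n` be the image under `x` of the first `n` columns. If `A (n + 1) ⊆ F * A n` with `F`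
finite, a term `x j` far down column `n` would lie in `b * x i` for some `b ∈ F` and some `i`
in an earlier column, which is impossible.
-/

theorem exists_seq_forall_lt_notMem {α : Type*} [Infinite α] (S : ℕ → α → Set α)
    (hS : ∀ n a, (S n a).Finite) (hmono : ∀ a, Monotone (S · a)) :
    ∃ x : ℕ → α, ∀ i j, i < j → x j ∉ S j (x i) := by
  -- The terms are built together with strictly increasing stages; monotonicity of `S`
  -- lets the stage be replaced by the index.
  obtain ⟨f, -, hf⟩ := exists_seq_of_forall_finset_exists (fun _ => True)
    (fun p q : ℕ × α => p.1 < q.1 ∧ q.2 ∉ S q.1 p.2) fun s _ => by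
      let N := s.sup Prod.fst + 1
      obtain ⟨y, hy⟩ := (s.finite_toSet.biUnion fun p _ => hS N p.2).exists_notMem
      exact ⟨(N, y), trivial, fun p hp =>
        ⟨Nat.lt_succ_of_le (s.le_sup hp), fun h => hy (Set.mem_biUnion hp h)⟩⟩
  have hstage : StrictMono fun n => (f n).1 := fun m n h => (hf m n h).1
  exact ⟨fun n => (f n).2, fun i j h hmem => (hf i j h).2 (hmono _ hstage.le_apply hmem)⟩

theorem exists_seq_eventually_mul_inv_ne (G : Type*) [Group G] [Countable G] [Infinite G] :
    ∃ x : ℕ → G, ∀ g, ∀ᶠ j in atTop, ∀ i, i ≠ j → x j * (x i)⁻¹ ≠ g := by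
  let _ := Encodable.ofCountable G
  let ball (n : ℕ) : Set G := Encodable.encode ⁻¹' Set.Iic n
  have hball (n : ℕ) : (ball n).Finite :=
    (Set.finite_Iic n).preimage Encodable.encode_injective.injOn
  have hball_mono : Monotone ball := fun m n hmn => Set.preimage_mono (Set.Iic_subset_Iic.2 hmn)
  obtain ⟨x, hx⟩ := exists_seq_forall_lt_notMem (fun n a => (ball n ∪ (ball n)⁻¹) * {a})
    (fun n a => ((hball n).union (hball n).inv).mul (Set.finite_singleton a))
    (fun a m n hmn => Set.mul_subset_mul_right
      (Set.union_subset_union (hball_mono hmn) (Set.inv_subset_inv.2 (hball_mono hmn))))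
  refine ⟨x, fun g => eventually_atTop.2 ⟨Encodable.encode g, fun j hj i hij hxg => ?_⟩⟩
  have hg : g ∈ ball j := hj
  rw [mul_inv_eq_iff_eq_mul] at hxg
  rcases hij.lt_or_gt with h | h
  · exact hx i j h ⟨g, Or.inl hg, x i, rfl, hxg.symm⟩
  · refine hx j i h ⟨g⁻¹, Or.inr ?_, x j, rfl, by rw [hxg]; exact inv_mul_cancel_left g (x i)⟩
    exact Set.inv_mem_inv.2 (hball_mono h.le hg)

theorem stmt13 {G : Type*} [Group G] [Countable G] [Infinite G] :
    ∃ A : ℕ → Set G, (∀ n, A n ⊆ A (n + 1)) ∧ ∀ n, ¬ Bdd (A (n + 1)) (A n) := by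
  obtain ⟨x, hx⟩ := exists_seq_eventually_mul_inv_ne G
  refine ⟨fun n => x '' {j | (Nat.unpair j).1 < n},
    fun n => Set.image_mono fun j hj => Nat.lt_succ_of_lt hj, ?_⟩
  rintro n ⟨F, hF⟩
  obtain ⟨N, hN⟩ := eventually_atTop.1 (F.eventually_all.2 fun g _ => hx g)
  have hcol : (Nat.unpair (Nat.pair n N)).1 = n := by rw [Nat.unpair_pair]
  obtain ⟨b, hb, _, ⟨i, hi, rfl⟩, hbi⟩ := hF ⟨Nat.pair n N, by simp, rfl⟩
  have hij : i ≠ Nat.pair n N := by rintro rfl; exact hi.ne hcol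
  exact hN _ (Nat.right_le_pair n N) b hb i hij (by rw [← hbi, mul_inv_cancel_right])
end

section
/- No subgroup H of infinite index in a group G is equivalent to an absorbing set: for every finite subset F of G, the set FH is not absorbing, i.e., there exists a finite S ⊆ G such that ⋂_{s ∈ S} sFH = ∅. -/
open scoped Pointwise

/-!
If `x` lies in `s • (F * H)` for every `s` in a finite set `T` with more than `|F|` elements, then by
pigeonhole there are `s ≠ t` in `T` and `f ∈ F` with `x ∈ sfH ∩ tfH`, so `sfH = tfH`. It therefore
suffices to find such a `T` for which, for each `f ∈ F`, the cosets `tfH` (`t ∈ T`) are pairwise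
distinct. Such a `T` is built greedily: a new element must avoid the finitely many cosets
`t (fHf⁻¹)`, and by B. H. Neumann's lemma finitely many cosets of subgroups of infinite index never
cover `G`.
-/

namespace Subgroup

variable {G : Type*} [Group G]

theorem exists_forall_mk_mul_ne_of_index_eq_zero {H : Subgroup G} (hH : H.index = 0)
    (T F : Finset G) : ∃ g : G, ∀ t ∈ T, ∀ f ∈ F, ((g * f : G) : G ⧸ H) ≠ (t * f : G) := by
  by_contra! hcon
  have hcover : ⋃ p ∈ T ×ˢ F,
      p.1 • (H.map (MulAut.conj p.2).toMonoidHom : Set G) = .univ := by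
    refine Set.eq_univ_of_forall fun g ↦ ?_
    obtain ⟨t, ht, f, hf, hgt⟩ := hcon g
    refine Set.mem_biUnion (Finset.mk_mem_product ht hf) ?_
    rw [mem_leftCoset_iff, SetLike.mem_coe, mem_map_equiv]
    convert QuotientGroup.eq.mp hgt.symm using 1
    simp only [MulAut.conj_symm_apply]
    group
  obtain ⟨p, -, hfin⟩ := exists_finiteIndex_of_leftCoset_cover hcover
  exact hfin.index_ne_zero ((index_map_equiv H (MulAut.conj p.2)).trans hH)

theorem exists_card_eq_forall_injOn_mk_mul {H : Subgroup G} (hH : H.index = 0) (F : Finset G)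
    (n : ℕ) : ∃ T : Finset G, T.card = n ∧ ∀ f ∈ F, Set.InjOn (fun t ↦ ((t * f : G) : G ⧸ H)) T := by
  classical
  induction n with
  | zero => exact ⟨∅, rfl, by simp⟩
  | succ n ih =>
    obtain ⟨T, hcard, hT⟩ := ih
    -- avoiding the cosets `t * 1 * H` also keeps `g` out of `T`
    obtain ⟨g, hg⟩ := exists_forall_mk_mul_ne_of_index_eq_zero hH T (insert 1 F)
    have hgT : g ∉ T := fun hgT ↦ hg g hgT 1 (Finset.mem_insert_self 1 F) rfl
    refine ⟨insert g T, by rw [Finset.card_insert_of_notMem hgT, hcard], fun f hf ↦ ?_⟩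
    rw [Finset.coe_insert, Set.injOn_insert (by exact_mod_cast hgT)]
    exact ⟨hT f hf, fun ⟨t, ht, hgt⟩ ↦ hg t ht f (Finset.mem_insert_of_mem hf) hgt.symm⟩

theorem biInter_mul_image_eq_empty_of_injOn {H : Subgroup G} {F T : Finset G}
    (hcard : F.card < T.card) (hT : ∀ f ∈ F, Set.InjOn (fun t ↦ ((t * f : G) : G ⧸ H)) T) :
    ⋂ s ∈ T, (s * ·) '' ((F : Set G) * (H : Set G)) = ∅ := by
  refine Set.eq_empty_of_forall_notMem fun x hx ↦ ?_
  have hcoset : ∀ s ∈ T, ∃ f ∈ F, ((s * f : G) : G ⧸ H) = x := by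
    intro s hs
    obtain ⟨-, ⟨f, hf, h, hh, rfl⟩, rfl⟩ := Set.mem_iInter₂.mp hx s hs
    exact ⟨f, hf, QuotientGroup.eq.mpr (by simpa [mul_assoc] using hh)⟩
  choose! φ hφF hφx using hcoset
  obtain ⟨s, hs, t, ht, hst, hφ⟩ := Finset.exists_ne_map_eq_of_card_lt_of_maps_to hcard hφF
  exact hst (hT (φ s) (hφF s hs) hs ht ((hφx s hs).trans (hφ ▸ hφx t ht).symm))

end Subgroup

theorem stmt15 {G : Type*} [Group G] (H : Subgroup G) (hH : H.index = 0)
    (F : Finset G) :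
    ∃ S : Finset G, (⋂ s ∈ S, (s * ·) '' ((F : Set G) * (H : Set G))) = ∅ := by
  obtain ⟨T, hcard, hT⟩ := Subgroup.exists_card_eq_forall_injOn_mk_mul hH F (F.card + 1)
  exact ⟨T, Subgroup.biInter_mul_image_eq_empty_of_injOn (by omega) hT⟩
end

section
/- Let G be a countably infinite group. If sequences of subsets Agₙ → B and A'gₙ → B' converge pointwise (indicator functions converge pointwise), and A ≈ A', then B ≈ B'. -/
open scoped Pointwise

/-- Pointwise convergence of (indicators of) a sequence of subsets of `G`. -/
def ConvSets {G : Type*} (C : ℕ → Set G) (L : Set G) : Prop :=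
  ∀ x : G, ∀ᶠ n in Filter.atTop, (x ∈ C n ↔ x ∈ L)

/-! If `A ⊆ F A'`, then `A gₙ ⊆ F (A' gₙ)` with the same finite `F` for every `n`. Left
multiplication by a finite set commutes with pointwise limits of sets and inclusions pass to the
limit, so `B ⊆ F B'`. -/

theorem Set.mem_mul_iff_exists_inv_mul_mem {G : Type*} [Group G] {s t : Set G} {x : G} :
    x ∈ s * t ↔ ∃ a ∈ s, a⁻¹ * x ∈ t := by
  refine Set.mem_mul.trans ⟨?_, ?_⟩
  · rintro ⟨a, ha, b, hb, rfl⟩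
    exact ⟨a, ha, by simpa using hb⟩
  · rintro ⟨a, ha, hx⟩
    exact ⟨a, ha, a⁻¹ * x, hx, mul_inv_cancel_left a x⟩

namespace ConvSets

variable {G : Type*} {C D : ℕ → Set G} {L M : Set G}

theorem subset_of_forall_subset (hCD : ∀ n, C n ⊆ D n) (hC : ConvSets C L)
    (hD : ConvSets D M) : L ⊆ M := fun x hx ↦ by
  obtain ⟨n, hCn, hDn⟩ := ((hC x).and (hD x)).exists
  exact hDn.1 (hCD n (hCn.2 hx))

theorem finset_mul [Group G] (F : Finset G) (hC : ConvSets C L) :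
    ConvSets (fun n ↦ (F : Set G) * C n) ((F : Set G) * L) := fun x ↦ by
  filter_upwards [(Filter.eventually_all_finset F).2 fun f _ ↦ hC (f⁻¹ * x)] with n hn
  simp only [Set.mem_mul_iff_exists_inv_mul_mem, Finset.mem_coe]
  exact exists_congr fun f ↦ and_congr_right fun hf ↦ hn f hf

end ConvSets

theorem Set.image_mul_right_subset_mul {G : Type*} [Group G] {s t u : Set G} (h : s ⊆ t * u)
    (g : G) : (· * g) '' s ⊆ t * (· * g) '' u := by
  simpa only [← Set.mul_singleton, mul_assoc] using Set.mul_subset_mul_right (t := {g}) h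

theorem Bdd.of_convSets {G : Type*} [Group G] {A A' B B' : Set G} {g : ℕ → G}
    (h : Bdd A A') (hB : ConvSets (fun n ↦ (· * g n) '' A) B)
    (hB' : ConvSets (fun n ↦ (· * g n) '' A') B') : Bdd B B' :=
  let ⟨F, hF⟩ := h
  ⟨F, hB.subset_of_forall_subset (fun n ↦ Set.image_mul_right_subset_mul hF (g n))
    (hB'.finset_mul F)⟩

theorem stmt16_general {G : Type*} [Group G]
    (A A' B B' : Set G) (g : ℕ → G)
    (h1 : ConvSets (fun n => (· * g n) '' A) B)
    (h2 : ConvSets (fun n => (· * g n) '' A') B')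
    (hAA' : EquivBdd A A') : EquivBdd B B' :=
  ⟨hAA'.1.of_convSets h1 h2, hAA'.2.of_convSets h2 h1⟩

theorem stmt16 {G : Type*} [Group G] [Countable G] [Infinite G]
    (A A' B B' : Set G) (g : ℕ → G)
    (h1 : ConvSets (fun n => (· * g n) '' A) B)
    (h2 : ConvSets (fun n => (· * g n) '' A') B')
    (hAA' : EquivBdd A A') : EquivBdd B B' :=
  stmt16_general A A' B B' g h1 h2 hAA'
end

section
/- The relation ≿ on subsets of a countably infinite group G, where A ≿ B iff there is a sequence (gₙ) in G and a subset B' with Agₙ → B' (pointwise convergence of indicators) and B ≈ B', is transitive. -/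
open scoped Pointwise

/-- `A ≿ B`: some sequence of right translates of `A` converges to a set equivalent to `B`. -/
def Succsim {G : Type*} [Group G] (A B : Set G) : Prop :=
  ∃ (g : ℕ → G) (B' : Set G), ConvSets (fun n => (· * g n) '' A) B' ∧ EquivBdd B B'

/-!
Write `A gₙ → B' ≈ B` and `B hₘ → C' ≈ C`. By compactness of `{0,1}^G`, a subsequence of
`B' hₘ` converges to some `C''`; since `B hₘ` and `B' hₘ` are equivalent with the same finite
sets of translates for every `m`, their limits `C'` and `C''` are equivalent too, so `C ≈ C''`.
For each fixed `m` we have `A gₙ hₘ → B' hₘ` as `n → ∞`, and a diagonal choice of `n = N(m)`,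
possible because `G` is countable, gives `A g_{N(m)} hₘ → C''`.
-/

open Filter

section Bdd

variable {G : Type*} [Group G]

theorem Bdd.trans {A B C : Set G} (hAB : Bdd A B) (hBC : Bdd B C) : Bdd A C := by
  classical
  obtain ⟨F₁, hF₁⟩ := hAB
  obtain ⟨F₂, hF₂⟩ := hBC
  refine ⟨F₁ * F₂, ?_⟩
  calc A ⊆ (F₁ : Set G) * B := hF₁
    _ ⊆ (F₁ : Set G) * ((F₂ : Set G) * C) := Set.mul_subset_mul_left hF₂
    _ = ((F₁ * F₂ : Finset G) : Set G) * C := by push_cast; rw [mul_assoc]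

theorem EquivBdd.trans {A B C : Set G} (hAB : EquivBdd A B) (hBC : EquivBdd B C) :
    EquivBdd A C :=
  ⟨hAB.1.trans hBC.1, hBC.2.trans hAB.2⟩

theorem image_mul_right_subset_mul {A B : Set G} {F : Set G} (h : A ⊆ F * B) (k : G) :
    (· * k) '' A ⊆ F * (· * k) '' B := by
  simpa only [← Set.mul_singleton, mul_assoc] using Set.mul_subset_mul_right (t := {k}) h

end Bdd

section ConvSets

theorem ConvSets.comp_strictMono {α : Type*} {C : ℕ → Set α} {L : Set α} (h : ConvSets C L)
    {φ : ℕ → ℕ} (hφ : StrictMono φ) : ConvSets (fun n => C (φ n)) L :=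
  fun x => hφ.tendsto_atTop.eventually (h x)

theorem exists_strictMono_convSets {α : Type*} [Countable α] (C : ℕ → Set α) :
    ∃ φ : ℕ → ℕ, StrictMono φ ∧ ∃ L : Set α, ConvSets (fun n => C (φ n)) L := by
  classical
  obtain ⟨L, -, φ, hφ, hL⟩ := isCompact_univ.isSeqCompact
    (fun n => Set.mem_univ (fun x => decide (x ∈ C n) : α → Bool))
  refine ⟨φ, hφ, {x | L x = true}, fun x => ?_⟩
  have hx := tendsto_pi_nhds.1 hL x
  rw [nhds_discrete, tendsto_pure] at hx
  filter_upwards [hx] with n hn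
  simp only [← hn, Function.comp_apply, decide_eq_true_eq]

/-- Enumerate `α` and let `N m` make the `m`-th row agree with its limit
on the first `m + 1` points. -/
theorem ConvSets.exists_diagonal {α : Type*} [Countable α] {C : ℕ → ℕ → Set α}
    {L : ℕ → Set α} {L' : Set α} (hC : ∀ m, ConvSets (C m) (L m)) (hL : ConvSets L L') :
    ∃ N : ℕ → ℕ, ConvSets (fun m => C m (N m)) L' := by
  rcases isEmpty_or_nonempty α with hα | hα
  · exact ⟨id, fun x => isEmptyElim x⟩
  obtain ⟨e, he⟩ := exists_surjective_nat α
  have hrow : ∀ m, ∃ N, ∀ i ≤ m, (e i ∈ C m N ↔ e i ∈ L m) := fun m =>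
    ((eventually_all_finite (Set.finite_Iic m)).2 fun i _ => hC m (e i)).exists
  choose N hN using hrow
  refine ⟨N, fun x => ?_⟩
  obtain ⟨i, rfl⟩ := he x
  filter_upwards [hL (e i), eventually_ge_atTop i] with m hm hi
  exact (hN m i hi).trans hm

variable {G : Type*} [Group G]

theorem ConvSets.image_mul_right {C : ℕ → Set G} {L : Set G} (h : ConvSets C L) (k : G) :
    ConvSets (fun n => (· * k) '' C n) ((· * k) '' L) := by
  intro x
  simpa only [Set.image_mul_right, Set.mem_preimage] using h (x * k⁻¹)

theorem ConvSets.subset_mul {C D : ℕ → Set G} {L M : Set G} {F : Finset G}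
    (hC : ConvSets C L) (hD : ConvSets D M) (hCD : ∀ n, C n ⊆ (F : Set G) * D n) :
    L ⊆ (F : Set G) * M := by
  intro x hx
  obtain ⟨n, hCn, hDn⟩ := ((hC x).and
    ((eventually_all_finset F).2 fun f _ => hD (f⁻¹ * x))).exists
  obtain ⟨f, hf, y, hy, rfl⟩ := hCD n (hCn.2 hx)
  exact ⟨f, hf, y, by simpa using (hDn f hf).1 (by simpa using hy), rfl⟩

theorem EquivBdd.of_convSets_image_mul_right {A B L M : Set G} {k : ℕ → G}
    (hAB : EquivBdd A B) (hA : ConvSets (fun n => (· * k n) '' A) L)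
    (hB : ConvSets (fun n => (· * k n) '' B) M) : EquivBdd L M := by
  obtain ⟨⟨F₁, hF₁⟩, ⟨F₂, hF₂⟩⟩ := hAB
  exact ⟨⟨F₁, hA.subset_mul hB fun n => image_mul_right_subset_mul hF₁ (k n)⟩,
    ⟨F₂, hB.subset_mul hA fun n => image_mul_right_subset_mul hF₂ (k n)⟩⟩

end ConvSets

theorem stmt17_general {G : Type*} [Group G] [Countable G]
    (A B C : Set G) (hAB : Succsim A B) (hBC : Succsim B C) : Succsim A C := by
  obtain ⟨g, B', hAg, hBB'⟩ := hAB
  obtain ⟨h, C', hBh, hCC'⟩ := hBC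
  obtain ⟨ψ, hψ, C'', hB'h⟩ := exists_strictMono_convSets fun m => (· * h m) '' B'
  have hC'C'' : EquivBdd C' C'' :=
    hBB'.of_convSets_image_mul_right (hBh.comp_strictMono hψ) hB'h
  obtain ⟨N, hN⟩ := ConvSets.exists_diagonal (fun m => hAg.image_mul_right (h (ψ m))) hB'h
  refine ⟨fun m => g (N m) * h (ψ m), C'', ?_, hCC'.trans hC'C''⟩
  simpa only [Set.image_image, mul_assoc] using hN

theorem stmt17 {G : Type*} [Group G] [Countable G] [Infinite G]
    (A B C : Set G) (hAB : Succsim A B) (hBC : Succsim B C) : Succsim A C :=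
  stmt17_general A B C hAB hBC
end
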